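/- If 0 < o ≤ OPT, then for every i ∈ {0,…,L}, every p ∈ Q_i, and every finite Z ⊆ ℝ^d with |Z| = k: dist(p,Z)² ≤ (10·d³/T_i(o))·Σ_{q∈Q^I} dist(q,Z)²; that is, the sensitivity of p with respect to Q^I is at most s′(p) = 10·d³/T_i(o). -/

import Mathlib

open scoped BigOperators Classical
open MeasureTheory

noncomputable section

/-- Points of `ℝ^d` with the Euclidean distance. -/
abbrev Pt (d : ℕ) := EuclideanSpace ℝ (Fin d)

/-- Side length `g_i = Δ / 2^i` of the grid `G_i`. -/
def gside (Δ : ℕ) (i : ℤ) : ℝ := (Δ : ℝ) / (2 : ℝ) ^ i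

/-- The half-open axis-parallel cube of side length `g` with corner `v + n·g`
(a cell of the shifted grid). -/
def cell (d : ℕ) (v : Pt d) (g : ℝ) (n : Fin d → ℤ) : Set (Pt d) :=
  {x | ∀ α : Fin d, v α + (n α : ℝ) * g ≤ x α ∧ x α < v α + ((n α : ℝ) + 1) * g}

/-- Index of the cell of side length `g` containing the point `p`. -/
def idx (d : ℕ) (v : Pt d) (g : ℝ) (p : Pt d) : Fin d → ℤ :=
  fun α => ⌊(p α - v α) / g⌋

/-- `|C ∩ Q|`, the number of points of `Q` in the given cell. -/
def cellCount (d : ℕ) (Q : Finset (Pt d)) (v : Pt d) (g : ℝ) (n : Fin d → ℤ) : ℕ :=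
  (Q.filter (fun p => p ∈ cell d v g n)).card

/-- The threshold `T_i(o) = (d/g_i)² · o / (100k)`. -/
def Tthr (d k Δ : ℕ) (o : ℝ) (i : ℤ) : ℝ :=
  ((d : ℝ) / gside Δ i) ^ 2 * o / (100 * (k : ℝ))

/-- A cell is heavy iff it is the cell of `G_{-1}` containing `Q`, or it is a nonempty
cell of some `G_i`, `0 ≤ i ≤ L-1`, whose estimate `ẑ` is at least `T_i(o)`. -/
def Heavy (d k L Δ : ℕ) (Q : Finset (Pt d)) (v : Pt d) (o : ℝ)
    (zhat : ℤ → (Fin d → ℤ) → ℝ) (i : ℤ) (n : Fin d → ℤ) : Prop :=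
  (i = -1 ∧ (Q : Set (Pt d)) ⊆ cell d v (gside Δ i) n) ∨
  (0 ≤ i ∧ i ≤ (L : ℤ) - 1 ∧ 0 < cellCount d Q v (gside Δ i) n ∧
    Tthr d k Δ o i ≤ zhat i n)

/-- A cell of `G_i` (`0 ≤ i ≤ L`) is crucial iff it is not heavy but all of its
ancestors are heavy. -/
def Crucial (d k L Δ : ℕ) (Q : Finset (Pt d)) (v : Pt d) (o : ℝ)
    (zhat : ℤ → (Fin d → ℤ) → ℝ) (i : ℤ) (n : Fin d → ℤ) : Prop :=
  0 ≤ i ∧ i ≤ (L : ℤ) ∧ ¬ Heavy d k L Δ Q v o zhat i n ∧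
  ∀ j : ℤ, -1 ≤ j → j < i → ∀ m : Fin d → ℤ,
    cell d v (gside Δ i) n ⊆ cell d v (gside Δ j) m →
      Heavy d k L Δ Q v o zhat j m

/-- `Q_i`, the set of points of `Q` lying in a crucial cell of `G_i`. -/
def Qlevel (d k L Δ : ℕ) (Q : Finset (Pt d)) (v : Pt d) (o : ℝ)
    (zhat : ℤ → (Fin d → ℤ) → ℝ) (i : ℤ) : Finset (Pt d) :=
  Q.filter (fun p => Crucial d k L Δ Q v o zhat i (idx d v (gside Δ i) p))

/-- Accuracy guarantee of the estimation function `ẑ`: for every nonempty cell of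
`G_i`, `0 ≤ i ≤ L-1`, either `|ẑ(C) - |C∩Q|| ≤ 0.1·T_i(o)` or
`0.99·|C∩Q| ≤ ẑ(C) ≤ 1.01·|C∩Q|`. -/
def ZhatAccurate (d k L Δ : ℕ) (Q : Finset (Pt d)) (v : Pt d) (o : ℝ)
    (zhat : ℤ → (Fin d → ℤ) → ℝ) : Prop :=
  ∀ i : ℤ, 0 ≤ i → i ≤ (L : ℤ) - 1 → ∀ n : Fin d → ℤ,
    0 < cellCount d Q v (gside Δ i) n →
      (|zhat i n - (cellCount d Q v (gside Δ i) n : ℝ)| ≤ 0.1 * Tthr d k Δ o i ∨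
        (0.99 * (cellCount d Q v (gside Δ i) n : ℝ) ≤ zhat i n ∧
          zhat i n ≤ 1.01 * (cellCount d Q v (gside Δ i) n : ℝ)))

/-- `γ = ε / (1600·L·d³)`. -/
def gammaPar (d L : ℕ) (ε : ℝ) : ℝ := ε / (1600 * (L : ℝ) * (d : ℝ) ^ 3)

/-- Accuracy guarantee of the estimates `q̂_i` of `|Q_i|`. -/
def QhatAccurate (d k L Δ : ℕ) (Q : Finset (Pt d)) (v : Pt d) (o ε : ℝ)
    (zhat : ℤ → (Fin d → ℤ) → ℝ) (qhat : ℕ → ℝ) : Prop :=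
  ∀ i : ℕ, i ≤ L →
    0 ≤ qhat i ∧
    (|qhat i - ((Qlevel d k L Δ Q v o zhat i).card : ℝ)| ≤
        0.1 * ε * gammaPar d L ε * Tthr d k Δ o i ∨
      ((1 - 0.01 * ε) * ((Qlevel d k L Δ Q v o zhat i).card : ℝ) ≤ qhat i ∧
        qhat i ≤ (1 + 0.01 * ε) * ((Qlevel d k L Δ Q v o zhat i).card : ℝ)))

/-- The set of levels `I = {i ∈ {0,…,L} : q̂_i ≥ γ·T_i(o)}`. -/
def levelI (d k L Δ : ℕ) (o ε : ℝ) (qhat : ℕ → ℝ) : Finset ℕ :=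
  (Finset.range (L + 1)).filter
    (fun i => gammaPar d L ε * Tthr d k Δ o i ≤ qhat i)

/-- `Q^I = ∪_{i ∈ I} Q_i`. -/
def QI (d k L Δ : ℕ) (Q : Finset (Pt d)) (v : Pt d) (o ε : ℝ)
    (zhat : ℤ → (Fin d → ℤ) → ℝ) (qhat : ℕ → ℝ) : Finset (Pt d) :=
  (levelI d k L Δ o ε qhat).biUnion (fun i => Qlevel d k L Δ Q v o zhat i)

/-- `dist(q, Z) = min_{z ∈ Z} dist(q, z)`. -/
def nearDist (d : ℕ) (q : Pt d) (Z : Finset (Pt d)) : ℝ :=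
  sInf ((dist q) '' (Z : Set (Pt d)))

/-- `cost(P, Z) = Σ_{q ∈ P} dist(q, Z)²`. -/
def cost (d : ℕ) (P Z : Finset (Pt d)) : ℝ :=
  ∑ q ∈ P, nearDist d q Z ^ 2

/-- `OPT`, the optimal `k`-means cost of `Q`. -/
def OPTcost (d k : ℕ) (Q : Finset (Pt d)) : ℝ :=
  sInf {c : ℝ | ∃ Z : Finset (Pt d), Z.card = k ∧ c = cost d Q Z}

/-- Distance between two sets: `inf {dist x z : x ∈ C, z ∈ Z}`. -/
def setDist (d : ℕ) (C Z : Set (Pt d)) : ℝ := sInf (Set.image2 dist C Z)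

/-- A cell `C ∈ G_i` is a center cell w.r.t. `Z*` if `dist(C, Z*) ≤ g_i/(2d)`. -/
def IsCenterCell (d Δ : ℕ) (v : Pt d) (Zstar : Finset (Pt d)) (i : ℤ)
    (n : Fin d → ℤ) : Prop :=
  setDist d (cell d v (gside Δ i) n) (Zstar : Set (Pt d)) ≤ gside Δ i / (2 * (d : ℝ))

/-- The box `[0, Δ]^d` from which the random shift is drawn. -/
def shiftBox (d Δ : ℕ) : Set (Pt d) := {v | ∀ α : Fin d, v α ∈ Set.Icc (0 : ℝ) (Δ : ℝ)}

/-!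
Let `p` lie in a crucial cell of level `i`. Its parent cell is heavy, so it contains `N` points
of `Q` with `T_i ≤ 4.5 N d³` (at level `0` the parent is the root cell, and `o ≤ OPT` bounds
`T_0` instead of the estimate `ẑ`). Averaging `dist(p,Z)² ≤ 2 dist(q,Z)² + 2 dist(p,q)²` over
the points `q` of the parent cell, and using `T_i g_i² = d² o / (100k) ≤ d² cost(Q,Z) / 100`,
gives `T_i dist(p,Z)² ≤ 9.9 d³ cost(Q,Z)`. Every level `j ∉ I` has `|Q_j| ≤ 1.1 γ T_j`, so by the
same bound the at most `L + 1` such levels carry at most `1%` of `cost(Q,Z)`; hence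
`cost(Q,Z) ≤ cost(Q^I,Z) / 0.99`.
-/

section KMeansCost

variable {d : ℕ}

lemma nearDist_nonneg (q : Pt d) (Z : Finset (Pt d)) : 0 ≤ nearDist d q Z :=
  Real.sInf_nonneg (by rintro _ ⟨z, -, rfl⟩; exact dist_nonneg)

lemma nearDist_le_dist {Z : Finset (Pt d)} {z : Pt d} (hz : z ∈ Z) (q : Pt d) :
    nearDist d q Z ≤ dist q z :=
  csInf_le ⟨0, by rintro _ ⟨w, -, rfl⟩; exact dist_nonneg⟩ ⟨z, hz, rfl⟩

lemma exists_nearDist_eq {Z : Finset (Pt d)} (hZ : Z.Nonempty) (q : Pt d) :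
    ∃ z ∈ Z, nearDist d q Z = dist q z := by
  obtain ⟨z, hz, h⟩ :=
    ((Finset.coe_nonempty.2 hZ).image (dist q)).csInf_mem (Z.finite_toSet.image _)
  exact ⟨z, hz, h.symm⟩

lemma nearDist_le_dist_add {Z : Finset (Pt d)} (hZ : Z.Nonempty) (p q : Pt d) :
    nearDist d p Z ≤ dist p q + nearDist d q Z := by
  obtain ⟨z, hz, h⟩ := exists_nearDist_eq hZ q
  rw [h]
  exact (nearDist_le_dist hz p).trans (dist_triangle p q z)

lemma nearDist_sq_le {Z : Finset (Pt d)} (hZ : Z.Nonempty) (p q : Pt d) :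
    nearDist d p Z ^ 2 ≤ 2 * (dist p q ^ 2 + nearDist d q Z ^ 2) :=
  (pow_le_pow_left₀ (nearDist_nonneg p Z) (nearDist_le_dist_add hZ p q) 2).trans add_sq_le

lemma cost_nonneg (P Z : Finset (Pt d)) : 0 ≤ cost d P Z :=
  Finset.sum_nonneg fun _ _ => sq_nonneg _

lemma cost_mono {P P' : Finset (Pt d)} (h : P ⊆ P') (Z : Finset (Pt d)) :
    cost d P Z ≤ cost d P' Z :=
  Finset.sum_le_sum_of_subset_of_nonneg h fun _ _ _ => sq_nonneg _

lemma OPTcost_le_cost {k : ℕ} (Q : Finset (Pt d)) {Z : Finset (Pt d)} (hZ : Z.card = k) :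
    OPTcost d k Q ≤ cost d Q Z :=
  csInf_le ⟨0, by rintro _ ⟨W, -, rfl⟩; exact cost_nonneg _ _⟩ ⟨Z, hZ, rfl⟩

/-- Any `k` centers including `q₀` witness this; `0 < d` makes room for them. -/
lemma OPTcost_le_card_mul (hd : 0 < d) {k : ℕ} (hk : 1 ≤ k) {Q : Finset (Pt d)} {q₀ : Pt d}
    {D : ℝ} (hD : ∀ q ∈ Q, dist q q₀ ^ 2 ≤ D) :
    OPTcost d k Q ≤ Q.card * D := by
  have : Nonempty (Fin d) := ⟨⟨0, hd⟩⟩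
  obtain ⟨Z, hq₀Z, hZ⟩ := Infinite.exists_superset_card_eq {q₀} k (by simpa using hk)
  calc OPTcost d k Q ≤ cost d Q Z := OPTcost_le_cost Q hZ
    _ ≤ Q.card • D := Finset.sum_le_card_nsmul _ _ _ fun q hq =>
        (pow_le_pow_left₀ (nearDist_nonneg q Z)
          (nearDist_le_dist (hq₀Z (Finset.mem_singleton_self q₀)) q) 2).trans (hD q hq)
    _ = Q.card * D := nsmul_eq_mul _ _

end KMeansCost

section Grid

variable {d Δ : ℕ} {v : Pt d} {g : ℝ} {n : Fin d → ℤ}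

lemma mem_cell_iff (hg : 0 < g) {x : Pt d} : x ∈ cell d v g n ↔ idx d v g x = n := by
  simp only [cell, Set.mem_ofPred_eq, idx, funext_iff, Int.floor_eq_iff, le_div_iff₀ hg,
    div_lt_iff₀ hg]
  refine forall_congr' fun α => ?_
  constructor <;> rintro ⟨h₁, h₂⟩ <;> constructor <;> linarith

lemma mem_cell_idx (hg : 0 < g) (x : Pt d) : x ∈ cell d v g (idx d v g x) :=
  (mem_cell_iff hg).2 rfl

lemma idx_natCast_mul (t : ℕ) (x : Pt d) :
    idx d v (t * g) x = fun α => idx d v g x α / t := by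
  funext α
  rw [idx, idx, div_mul_eq_div_div_swap, Int.floor_div_natCast]

lemma dist_sq_le_of_mem_cell {x y : Pt d} (hx : x ∈ cell d v g n) (hy : y ∈ cell d v g n) :
    dist x y ^ 2 ≤ d * g ^ 2 := by
  rw [EuclideanSpace.dist_eq, Real.sq_sqrt (Finset.sum_nonneg fun _ _ => sq_nonneg _)]
  calc ∑ α, dist (x α) (y α) ^ 2 ≤ ∑ _α : Fin d, g ^ 2 := by
        refine Finset.sum_le_sum fun α _ => ?_
        rw [Real.dist_eq, sq_abs]
        obtain ⟨⟨hx₁, hx₂⟩, ⟨hy₁, hy₂⟩⟩ := And.intro (hx α) (hy α)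
        nlinarith
    _ = d * g ^ 2 := by simp

lemma gside_pos (hΔ : 0 < Δ) (i : ℤ) : 0 < gside Δ i :=
  div_pos (Nat.cast_pos.2 hΔ) (zpow_pos two_pos i)

lemma gside_eq_pow_mul {j i : ℤ} (hji : j ≤ i) :
    gside Δ j = (2 ^ (i - j).toNat : ℕ) * gside Δ i := by
  have h : ((2 ^ (i - j).toNat : ℕ) : ℝ) = 2 ^ (i - j) := by
    rw [Nat.cast_pow, Nat.cast_ofNat, ← zpow_natCast, Int.toNat_of_nonneg (by omega)]
  rw [h, gside, gside, zpow_sub₀ two_ne_zero]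
  field_simp

lemma gside_sub_one (i : ℤ) : gside Δ (i - 1) = 2 * gside Δ i := by
  simpa using gside_eq_pow_mul (Δ := Δ) (sub_one_lt i).le

lemma cell_idx_subset_cell_idx (hΔ : 0 < Δ) {j i : ℤ} (hji : j ≤ i) (p : Pt d) :
    cell d v (gside Δ i) (idx d v (gside Δ i) p) ⊆
      cell d v (gside Δ j) (idx d v (gside Δ j) p) := by
  intro x hx
  rw [mem_cell_iff (gside_pos hΔ i)] at hx
  rw [mem_cell_iff (gside_pos hΔ j), gside_eq_pow_mul hji, idx_natCast_mul, idx_natCast_mul, hx]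

lemma cellCount_mul_nearDist_sq_le {Z : Finset (Pt d)} (hZ : Z.Nonempty) (Q : Finset (Pt d))
    {q₀ : Pt d} (hq₀ : q₀ ∈ cell d v g n) :
    cellCount d Q v g n * nearDist d q₀ Z ^ 2 ≤
      2 * (cellCount d Q v g n * (d * g ^ 2) + cost d Q Z) := by
  set S := Q.filter (· ∈ cell d v g n)
  calc (cellCount d Q v g n : ℝ) * nearDist d q₀ Z ^ 2
        = ∑ _q ∈ S, nearDist d q₀ Z ^ 2 := by
        rw [Finset.sum_const, nsmul_eq_mul]; rfl
    _ ≤ ∑ q ∈ S, 2 * (d * g ^ 2 + nearDist d q Z ^ 2) := Finset.sum_le_sum fun q hq =>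
        (nearDist_sq_le hZ q₀ q).trans (by
          gcongr; exact dist_sq_le_of_mem_cell hq₀ (Finset.mem_filter.1 hq).2)
    _ = 2 * (cellCount d Q v g n * (d * g ^ 2) + cost d S Z) := by
        rw [← Finset.mul_sum, Finset.sum_add_distrib, Finset.sum_const, nsmul_eq_mul]; rfl
    _ ≤ 2 * (cellCount d Q v g n * (d * g ^ 2) + cost d Q Z) := by
        gcongr; exact cost_mono (Finset.filter_subset _ _) Z

end Grid

section Threshold

variable {d k Δ : ℕ} {o : ℝ}

lemma Tthr_pos (hd : 0 < d) (hk : 0 < k) (hΔ : 0 < Δ) (ho : 0 < o) (i : ℤ) :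
    0 < Tthr d k Δ o i := by
  have := gside_pos hΔ i
  unfold Tthr
  positivity

lemma Tthr_sub_one (i : ℤ) : Tthr d k Δ o (i - 1) = Tthr d k Δ o i / 4 := by
  rw [Tthr, Tthr, gside_sub_one]
  ring

lemma Tthr_mul_gside_sq (hΔ : 0 < Δ) (i : ℤ) :
    Tthr d k Δ o i * gside Δ i ^ 2 = d ^ 2 * o / (100 * k) := by
  have := (gside_pos hΔ i).ne'
  rw [Tthr]
  field_simp

end Threshold

section Levels

variable {d k L Δ : ℕ} {Q : Finset (Pt d)} {v : Pt d} {o : ℝ}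
  {zhat : ℤ → (Fin d → ℤ) → ℝ}

lemma ZhatAccurate.le_cellCount_of_heavy (hz : ZhatAccurate d k L Δ Q v o zhat) {j : ℤ}
    (hj : 0 ≤ j) {n : Fin d → ℤ} (hH : Heavy d k L Δ Q v o zhat j n) :
    0.9 * Tthr d k Δ o j ≤ cellCount d Q v (gside Δ j) n := by
  rcases hH with ⟨rfl, -⟩ | ⟨-, hjL, hpos, hT⟩
  · norm_num at hj
  rcases hz j hj hjL n hpos with h | ⟨-, h⟩
  · linarith [(abs_le.1 h).2]
  · linarith [Nat.cast_nonneg (α := ℝ) (cellCount d Q v (gside Δ j) n)]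

lemma heavy_of_mem_Qlevel (hΔ : 0 < Δ) {j : ℤ} {q : Pt d}
    (hq : q ∈ Qlevel d k L Δ Q v o zhat j) {i : ℤ} (hi : -1 ≤ i) (hij : i < j) :
    Heavy d k L Δ Q v o zhat i (idx d v (gside Δ i) q) :=
  (Finset.mem_filter.1 hq).2.2.2.2 i hi hij _ (cell_idx_subset_cell_idx hΔ hij.le q)

lemma coe_subset_cell_of_mem_Qlevel (hΔ : 0 < Δ) {j : ℤ} {q : Pt d}
    (hq : q ∈ Qlevel d k L Δ Q v o zhat j) :
    (Q : Set (Pt d)) ⊆ cell d v (gside Δ (-1)) (idx d v (gside Δ (-1)) q) := by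
  have hj : 0 ≤ j := (Finset.mem_filter.1 hq).2.1
  rcases heavy_of_mem_Qlevel hΔ hq le_rfl (by omega) with ⟨-, h⟩ | ⟨h, -⟩
  · exact h
  · norm_num at h

lemma pairwiseDisjoint_Qlevel (hΔ : 0 < Δ) (s : Set ℕ) :
    s.PairwiseDisjoint fun j : ℕ => Qlevel d k L Δ Q v o zhat j := by
  have key : ∀ {i j : ℕ}, i < j →
      Disjoint (Qlevel d k L Δ Q v o zhat i) (Qlevel d k L Δ Q v o zhat j) :=
    fun {i j} hij => Finset.disjoint_left.2 fun q hi hj =>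
      (Finset.mem_filter.1 hi).2.2.2.1 (heavy_of_mem_Qlevel hΔ hj (by omega) (by omega))
  exact fun i _ j _ hij => hij.lt_or_gt.elim key fun h => (key h).symm

/-- Following `q` down from the root, the first level whose cell is not heavy exists
(level `L` never is), and there `q` sits in a crucial cell. -/
lemma exists_mem_Qlevel (hΔ : 0 < Δ) {n : Fin d → ℤ}
    (hroot : (Q : Set (Pt d)) ⊆ cell d v (gside Δ (-1)) n) {q : Pt d} (hq : q ∈ Q) :
    ∃ j ≤ L, q ∈ Qlevel d k L Δ Q v o zhat j := by
  have hn : idx d v (gside Δ (-1)) q = n := (mem_cell_iff (gside_pos hΔ _)).1 (hroot hq)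
  have hL : ¬ Heavy d k L Δ Q v o zhat L (idx d v (gside Δ L) q) := by
    rintro (⟨h, -⟩ | ⟨-, h, -⟩) <;> omega
  have hlight : ∃ j : ℕ, ¬ Heavy d k L Δ Q v o zhat j (idx d v (gside Δ j) q) := ⟨L, hL⟩
  have hjL : Nat.find hlight ≤ L := Nat.find_min' hlight hL
  refine ⟨_, hjL, Finset.mem_filter.2 ⟨hq, Nat.cast_nonneg _, by exact_mod_cast hjL,
    Nat.find_spec hlight, fun i hi hij m hm => ?_⟩⟩
  obtain rfl := (mem_cell_iff (gside_pos hΔ i)).1 (hm (mem_cell_idx (gside_pos hΔ _) q))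
  obtain rfl | hi := hi.eq_or_lt
  · exact Or.inl ⟨rfl, hn ▸ hroot⟩
  · lift i to ℕ using (by omega)
    exact not_not.1 (Nat.find_min hlight (by exact_mod_cast hij))

end Levels

section SensitivityBound

variable {d k L Δ : ℕ} {Q : Finset (Pt d)} {v : Pt d} {o ε : ℝ}
  {zhat : ℤ → (Fin d → ℤ) → ℝ} {qhat : ℕ → ℝ}

lemma Tthr_le_cellCount_parent (hd : 1 ≤ d) (hk : 1 ≤ k) (hΔ : 0 < Δ)
    (hoOPT : o ≤ OPTcost d k Q) (hz : ZhatAccurate d k L Δ Q v o zhat) {j : ℤ} {q₀ : Pt d}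
    (hq₀ : q₀ ∈ Qlevel d k L Δ Q v o zhat j) :
    Tthr d k Δ o j ≤
      4.5 * cellCount d Q v (gside Δ (j - 1)) (idx d v (gside Δ (j - 1)) q₀) * d ^ 3 := by
  have hd3 : (1 : ℝ) ≤ d ^ 3 := one_le_pow₀ (by exact_mod_cast hd)
  have hN := Nat.cast_nonneg (α := ℝ) (cellCount d Q v (gside Δ (j - 1))
    (idx d v (gside Δ (j - 1)) q₀))
  obtain ⟨hq₀Q, hj, -⟩ := Finset.mem_filter.1 hq₀
  obtain rfl | hj := hj.eq_or_lt
  · have hroot := coe_subset_cell_of_mem_Qlevel hΔ hq₀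
    rw [zero_sub] at hN ⊢
    set g := gside Δ (-1)
    have hcount : cellCount d Q v g (idx d v g q₀) = Q.card :=
      congrArg Finset.card (Finset.filter_true_of_mem fun q hq => hroot hq)
    rw [hcount] at hN ⊢
    have hOPT : o ≤ Q.card * (d * g ^ 2) := hoOPT.trans (OPTcost_le_card_mul hd hk
      fun q hq => dist_sq_le_of_mem_cell (hroot hq) (hroot hq₀Q))
    have hg : g = 2 * gside Δ 0 := by simpa using gside_sub_one (Δ := Δ) 0
    have hg₀ := gside_pos hΔ 0
    have hTg := Tthr_mul_gside_sq (d := d) (k := k) (o := o) hΔ 0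
    have hk' : (1 : ℝ) ≤ k := by exact_mod_cast hk
    have hT : Tthr d k Δ o 0 * gside Δ 0 ^ 2 ≤ 0.04 * Q.card * d ^ 3 * gside Δ 0 ^ 2 := by
      rw [hTg, div_le_iff₀ (by positivity)]
      rw [hg] at hOPT
      have hQd : (0 : ℝ) ≤ Q.card * d ^ 3 * gside Δ 0 ^ 2 := by positivity
      nlinarith [mul_le_mul_of_nonneg_left hOPT (sq_nonneg (d : ℝ)),
        mul_nonneg hQd (sub_nonneg.2 hk')]
    nlinarith [le_of_mul_le_mul_right hT (by positivity)]
  · have hparent := hz.le_cellCount_of_heavy (by omega)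
      (heavy_of_mem_Qlevel hΔ hq₀ (by omega) (sub_one_lt j))
    rw [Tthr_sub_one] at hparent
    nlinarith

lemma Tthr_mul_nearDist_sq_le (hd : 1 ≤ d) (hk : 1 ≤ k) (hΔ : 0 < Δ) (ho : 0 < o)
    (hoOPT : o ≤ OPTcost d k Q) (hz : ZhatAccurate d k L Δ Q v o zhat) {j : ℤ} {q₀ : Pt d}
    (hq₀ : q₀ ∈ Qlevel d k L Δ Q v o zhat j) {Z : Finset (Pt d)} (hZ : Z.card = k) :
    Tthr d k Δ o j * nearDist d q₀ Z ^ 2 ≤ 9.9 * d ^ 3 * cost d Q Z := by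
  have hparent := mem_cell_idx (v := v) (gside_pos hΔ (j - 1)) q₀
  set N : ℝ := (cellCount d Q v (gside Δ (j - 1)) (idx d v (gside Δ (j - 1)) q₀) : ℝ)
  have hN : 0 < N := Nat.cast_pos.2 <| Finset.card_pos.2
    ⟨q₀, Finset.mem_filter.2 ⟨(Finset.mem_filter.1 hq₀).1, hparent⟩⟩
  have hZne : Z.Nonempty := Finset.card_pos.1 (by omega)
  have hcell := cellCount_mul_nearDist_sq_le hZne Q hparent
  have hc : o ≤ cost d Q Z := hoOPT.trans (OPTcost_le_cost Q hZ)
  have hT₀ := (Tthr_pos hd hk hΔ ho j).le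
  have hT := Tthr_le_cellCount_parent hd hk hΔ hoOPT hz hq₀
  have hTg := Tthr_mul_gside_sq (d := d) (k := k) (o := o) hΔ j
  have ho_le : d ^ 2 * o / (100 * k) ≤ d ^ 2 * cost d Q Z / 100 :=
    div_le_div₀ (mul_nonneg (sq_nonneg _) (cost_nonneg Q Z)) (by gcongr) (by norm_num)
      (by nlinarith [(Nat.one_le_cast (α := ℝ)).2 hk])
  have hNc : 0 ≤ N * d ^ 3 * cost d Q Z := mul_nonneg (by positivity) (cost_nonneg Q Z)
  refine le_of_mul_le_mul_left ?_ hN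
  calc N * (Tthr d k Δ o j * nearDist d q₀ Z ^ 2)
      = Tthr d k Δ o j * (N * nearDist d q₀ Z ^ 2) := by ring
    _ ≤ Tthr d k Δ o j * (2 * (N * (d * gside Δ (j - 1) ^ 2) + cost d Q Z)) := by gcongr
    _ = 8 * N * d * (Tthr d k Δ o j * gside Δ j ^ 2) + 2 * Tthr d k Δ o j * cost d Q Z := by
        rw [gside_sub_one]; ring
    _ ≤ 8 * N * d * (d ^ 2 * cost d Q Z / 100) + 2 * (4.5 * N * d ^ 3) * cost d Q Z := by
        rw [hTg]; gcongr; exact cost_nonneg Q Z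
    _ ≤ N * (9.9 * d ^ 3 * cost d Q Z) := by nlinarith

lemma QhatAccurate.card_Qlevel_le (hq : QhatAccurate d k L Δ Q v o ε zhat qhat)
    (hε : ε < 1 / 2) {j : ℕ} (hjL : j ≤ L) (hj : j ∉ levelI d k L Δ o ε qhat) :
    ((Qlevel d k L Δ Q v o zhat j).card : ℝ) ≤ 1.1 * (gammaPar d L ε * Tthr d k Δ o j) := by
  have hlt : qhat j < gammaPar d L ε * Tthr d k Δ o j := by
    by_contra! h
    exact hj (Finset.mem_filter.2 ⟨Finset.mem_range.2 (by omega), h⟩)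
  have hc := Nat.cast_nonneg (α := ℝ) (Qlevel d k L Δ Q v o zhat j).card
  obtain ⟨hq₀, h | ⟨h, -⟩⟩ := hq j hjL
  · nlinarith [(abs_le.1 h).1]
  · nlinarith

lemma cost_Qlevel_le (hd : 1 ≤ d) (hk : 1 ≤ k) (hΔ : 0 < Δ) (ho : 0 < o)
    (hoOPT : o ≤ OPTcost d k Q) (hz : ZhatAccurate d k L Δ Q v o zhat)
    (hq : QhatAccurate d k L Δ Q v o ε zhat qhat) (hε : ε < 1 / 2)
    {j : ℕ} (hjL : j ≤ L) (hj : j ∉ levelI d k L Δ o ε qhat)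
    {Z : Finset (Pt d)} (hZ : Z.card = k) :
    cost d (Qlevel d k L Δ Q v o zhat j) Z ≤ 10.89 * gammaPar d L ε * d ^ 3 * cost d Q Z := by
  have hT := Tthr_pos hd hk hΔ ho j
  have hc : 0 ≤ 9.9 * d ^ 3 * cost d Q Z := mul_nonneg (by positivity) (cost_nonneg Q Z)
  refine le_of_mul_le_mul_left ?_ hT
  calc Tthr d k Δ o j * cost d (Qlevel d k L Δ Q v o zhat j) Z
      = ∑ q ∈ Qlevel d k L Δ Q v o zhat j, Tthr d k Δ o j * nearDist d q Z ^ 2 :=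
        Finset.mul_sum _ _ _
    _ ≤ (Qlevel d k L Δ Q v o zhat j).card • (9.9 * d ^ 3 * cost d Q Z) :=
        Finset.sum_le_card_nsmul _ _ _ fun q hq =>
          Tthr_mul_nearDist_sq_le hd hk hΔ ho hoOPT hz hq hZ
    _ ≤ 1.1 * (gammaPar d L ε * Tthr d k Δ o j) * (9.9 * d ^ 3 * cost d Q Z) := by
        rw [nsmul_eq_mul]; gcongr; exact hq.card_Qlevel_le hε hjL hj
    _ = Tthr d k Δ o j * (10.89 * gammaPar d L ε * d ^ 3 * cost d Q Z) := by ring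

lemma gammaPar_mul_pow_three (hd : 1 ≤ d) : gammaPar d L ε * d ^ 3 = ε / (1600 * L) := by
  have : (d : ℝ) ≠ 0 := by positivity
  rw [gammaPar]
  field_simp

lemma cost_sdiff_QI_le (hd : 1 ≤ d) (hk : 1 ≤ k) (hL : 1 ≤ L) (hΔ : 0 < Δ) (ho : 0 < o)
    (hoOPT : o ≤ OPTcost d k Q) (hz : ZhatAccurate d k L Δ Q v o zhat) (hε₀ : 0 < ε)
    (hε : ε < 1 / 2) (hq : QhatAccurate d k L Δ Q v o ε zhat qhat) {i : ℤ} {p : Pt d}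
    (hp : p ∈ Qlevel d k L Δ Q v o zhat i) {Z : Finset (Pt d)} (hZ : Z.card = k) :
    cost d (Q \ QI d k L Δ Q v o ε zhat qhat) Z ≤ 0.01 * cost d Q Z := by
  set J := Finset.range (L + 1) \ levelI d k L Δ o ε qhat
  have hsub : Q \ QI d k L Δ Q v o ε zhat qhat ⊆ J.biUnion (Qlevel d k L Δ Q v o zhat ·) := by
    intro q hq
    obtain ⟨hqQ, hqI⟩ := Finset.mem_sdiff.1 hq
    obtain ⟨j, hjL, hqj⟩ := exists_mem_Qlevel hΔ (coe_subset_cell_of_mem_Qlevel hΔ hp) hqQ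
    exact Finset.mem_biUnion.2 ⟨j, Finset.mem_sdiff.2 ⟨Finset.mem_range.2 (by omega),
      fun hjI => hqI (Finset.mem_biUnion.2 ⟨j, hjI, hqj⟩)⟩, hqj⟩
  have hJ : (J.card : ℝ) ≤ 2 * L := by
    have hJL : J.card ≤ L + 1 := (Finset.card_le_card Finset.sdiff_subset).trans_eq
      (Finset.card_range (L + 1))
    have : (1 : ℝ) ≤ L := by exact_mod_cast hL
    have : (J.card : ℝ) ≤ L + 1 := by exact_mod_cast hJL
    linarith
  have hc := cost_nonneg Q Z
  calc cost d (Q \ QI d k L Δ Q v o ε zhat qhat) Z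
      ≤ cost d (J.biUnion (Qlevel d k L Δ Q v o zhat ·)) Z := cost_mono hsub Z
    _ = ∑ j ∈ J, cost d (Qlevel d k L Δ Q v o zhat j) Z :=
        Finset.sum_biUnion (pairwiseDisjoint_Qlevel hΔ _)
    _ ≤ J.card • (10.89 * gammaPar d L ε * d ^ 3 * cost d Q Z) :=
        Finset.sum_le_card_nsmul _ _ _ fun j hj =>
          have hj := Finset.mem_sdiff.1 hj
          cost_Qlevel_le hd hk hΔ ho hoOPT hz hq hε
            (Nat.lt_succ_iff.1 (Finset.mem_range.1 hj.1)) hj.2 hZ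
    _ = J.card * (10.89 * ε / (1600 * L) * cost d Q Z) := by
        rw [nsmul_eq_mul, mul_assoc 10.89, gammaPar_mul_pow_three hd]; ring
    _ ≤ 2 * L * (10.89 * ε / (1600 * L) * cost d Q Z) := by gcongr
    _ ≤ 0.01 * cost d Q Z := by
        have : (L : ℝ) ≠ 0 := by positivity
        field_simp
        nlinarith

end SensitivityBound

theorem sensitivity_upper_bound_general
    (d k L Δ : ℕ) (hd : 1 ≤ d) (hk : 1 ≤ k) (hL : 1 ≤ L) (hΔ : Δ = 2 ^ L)
    (v : Pt d) (Q : Finset (Pt d))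
    (o : ℝ) (ho : 0 < o) (hoOPT : o ≤ OPTcost d k Q)
    (zhat : ℤ → (Fin d → ℤ) → ℝ)
    (hz : ZhatAccurate d k L Δ Q v o zhat)
    (ε : ℝ) (hε0 : 0 < ε) (hε1 : ε < 1 / 2)
    (qhat : ℕ → ℝ)
    (hq : QhatAccurate d k L Δ Q v o ε zhat qhat) :
    ∀ i : ℕ, i ≤ L → ∀ p ∈ Qlevel d k L Δ Q v o zhat i,
      ∀ Z : Finset (Pt d), Z.card = k →
        nearDist d p Z ^ 2 ≤
          (10 * (d : ℝ) ^ 3 / Tthr d k Δ o i) *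
            ∑ q ∈ QI d k L Δ Q v o ε zhat qhat, nearDist d q Z ^ 2 := by
  intro i _ p hp Z hZ
  have hΔ₀ : 0 < Δ := hΔ ▸ by positivity
  have hT := Tthr_pos hd hk hΔ₀ ho i
  have hp_bound := Tthr_mul_nearDist_sq_le hd hk hΔ₀ ho hoOPT hz hp hZ
  have hrest := cost_sdiff_QI_le hd hk hL hΔ₀ ho hoOPT hz hε0 hε1 hq hp hZ
  have hsplit : cost d (Q \ QI d k L Δ Q v o ε zhat qhat) Z +
      cost d (QI d k L Δ Q v o ε zhat qhat) Z = cost d Q Z :=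
    Finset.sum_sdiff <| Finset.biUnion_subset.2 fun _ _ => Finset.filter_subset _ _
  have hd3 : (0 : ℝ) < d ^ 3 := by positivity
  rw [div_mul_eq_mul_div, le_div_iff₀ hT]
  change _ ≤ 10 * (d : ℝ) ^ 3 * cost d (QI d k L Δ Q v o ε zhat qhat) Z
  nlinarith

/-- if `0 < o ≤ OPT`, then for every `i ∈ {0,…,L}`, every `p ∈ Q_i`,
and every `Z` with `|Z| = k`:
`dist(p,Z)² ≤ (10·d³/T_i(o))·Σ_{q ∈ Q^I} dist(q,Z)²`, i.e. the sensitivity of `p`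
with respect to `Q^I` is at most `s′(p) = 10·d³/T_i(o)`. -/
theorem sensitivity_upper_bound
    (d k L Δ : ℕ) (hd : 1 ≤ d) (hk : 1 ≤ k) (hL : 1 ≤ L) (hΔ : Δ = 2 ^ L)
    (v : Pt d) (Q : Finset (Pt d))
    (hQ : ∀ p ∈ Q, ∀ α : Fin d, ∃ m : ℤ, 1 ≤ m ∧ m ≤ (Δ : ℤ) ∧ p α = (m : ℝ))
    (o : ℝ) (ho : 0 < o) (hoOPT : o ≤ OPTcost d k Q)
    (zhat : ℤ → (Fin d → ℤ) → ℝ)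
    (hz : ZhatAccurate d k L Δ Q v o zhat)
    (ε : ℝ) (hε0 : 0 < ε) (hε1 : ε < 1 / 2)
    (qhat : ℕ → ℝ)
    (hq : QhatAccurate d k L Δ Q v o ε zhat qhat) :
    ∀ i : ℕ, i ≤ L → ∀ p ∈ Qlevel d k L Δ Q v o zhat i,
      ∀ Z : Finset (Pt d), Z.card = k →
        nearDist d p Z ^ 2 ≤
          (10 * (d : ℝ) ^ 3 / Tthr d k Δ o i) *
            ∑ q ∈ QI d k L Δ Q v o ε zhat qhat, nearDist d q Z ^ 2 :=
  sensitivity_upper_bound_general d k L Δ hd hk hL hΔ v Q o ho hoOPT zhat hz ε hε0 hε1 qhat hq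

end
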